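/- Let T ∈ ℝ^{k×n} with operator norm ‖T‖. Then for all unit vectors x₁, x₂ ∈ ℝ^m and all y₁, y₂ ∈ ℝ^n, ‖x₁ ⊗ (T y₁) − x₂ ⊗ (T y₂)‖ ≤ ‖T‖ · ‖x₁ ⊗ y₁ − x₂ ⊗ y₂‖ and ‖x₁ ⊗ (T y₁)‖ ≤ ‖T‖ · ‖x₁ ⊗ y₁‖. Consequently, if M ⊆ S^{m−1} is closed, K := conv(M), and K' ⊆ ℝ^n is a convex body with 0 ∈ K' and T is a linear map defined on the span of K', then K ⊗̂ (T K') is a 0-contraction of K ⊗̂ (‖T‖ K'), where K ⊗̂ K'' := conv{ x ⊗ y : x ∈ K, y ∈ K'' }. -/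

import Mathlib

open MeasureTheory ProbabilityTheory Metric Set
open scoped InnerProductSpace
open scoped Classical
open scoped Pointwise

noncomputable section

/-- Euclidean space `ℝ^k`. -/
abbrev Euc (k : ℕ) : Type := EuclideanSpace ℝ (Fin k)

/-- The linear action of a matrix `A ∈ ℝ^{n×m}` on Euclidean space, `x ↦ Ax`. -/
def mulE {m n : ℕ} (A : Matrix (Fin n) (Fin m) ℝ) (x : Euc m) : Euc n :=
  Matrix.toEuclideanLin A x

/-- The metric projection onto a set `S`: the point of `S` closest to `y`
(if a unique closest point characterizing property holds; junk value `0` otherwise). -/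
def metricProj {k : ℕ} (S : Set (Euc k)) (y : Euc k) : Euc k :=
  if h : ∃ z, z ∈ S ∧ ∀ w ∈ S, dist y z ≤ dist y w then h.choose else 0

/-- `C` is a closed convex cone (containing the origin). -/
def IsClosedConvexCone {k : ℕ} (C : Set (Euc k)) : Prop :=
  IsClosed C ∧ Convex ℝ C ∧ (∀ c : ℝ, 0 ≤ c → ∀ x ∈ C, c • x ∈ C) ∧ (0 : Euc k) ∈ C

/-- The polar cone `S° = {z | ⟨x,z⟩ ≤ 0 ∀ x ∈ S}`. -/
def polarCone {k : ℕ} (S : Set (Euc k)) : Set (Euc k) :=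
  {z | ∀ x ∈ S, ⟪x, z⟫_ℝ ≤ 0}

/-- The restricted norm `‖A‖_{C→D} = max_{x ∈ C ∩ S^{m-1}} ‖Proj_D (Ax)‖`. -/
def resNorm {m n : ℕ} (C : Set (Euc m)) (D : Set (Euc n)) (A : Matrix (Fin n) (Fin m) ℝ) : ℝ :=
  sSup ((fun x => ‖metricProj D (mulE A x)‖) '' (C ∩ sphere 0 1))

/-- The restricted singular value `σ_{C→D}(A) = min_{x ∈ C ∩ S^{m-1}} ‖Proj_D (Ax)‖`. -/
def resSval {m n : ℕ} (C : Set (Euc m)) (D : Set (Euc n)) (A : Matrix (Fin n) (Fin m) ℝ) : ℝ :=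
  sInf ((fun x => ‖metricProj D (mulE A x)‖) '' (C ∩ sphere 0 1))

/-- The restricted norm for arbitrary (not necessarily closed) cones:
`‖B‖_{K→K'} = sup { ⟨Bx, y⟩ : x ∈ K ∩ B^ℓ, y ∈ K' ∩ B^p }`. -/
def resNormGen {l p : ℕ} (K : Set (Euc l)) (K' : Set (Euc p))
    (B : Matrix (Fin p) (Fin l) ℝ) : ℝ :=
  sSup (Set.image2 (fun x y => ⟪mulE B x, y⟫_ℝ) (K ∩ closedBall 0 1) (K' ∩ closedBall 0 1))

/-- The operator (spectral) norm of a matrix. -/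
def opNorm {m n : ℕ} (A : Matrix (Fin n) (Fin m) ℝ) : ℝ :=
  ‖LinearMap.toContinuousLinearMap (Matrix.toEuclideanLin A)‖

/-- The standard Gaussian measure on `ℝ^k` (i.i.d. N(0,1) coordinates). -/
def stdGaussianE (k : ℕ) : Measure (Euc k) :=
  Measure.map (⇑(EuclideanSpace.equiv (Fin k) ℝ).symm)
    (Measure.pi fun _ : Fin k => gaussianReal 0 1)

/-- The standard Gaussian measure on `n × m` arrays (i.i.d. N(0,1) entries). -/
def stdGaussianPi (n m : ℕ) : Measure (Fin n → Fin m → ℝ) :=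
  Measure.pi fun _ : Fin n => Measure.pi fun _ : Fin m => gaussianReal 0 1

/-- The support function `h_K(x) = sup_{z ∈ K} ⟨x, z⟩`. -/
def suppFn {k : ℕ} (K : Set (Euc k)) (x : Euc k) : ℝ := sSup ((fun z => ⟪x, z⟫_ℝ) '' K)

/-- The capped-angle cosine `cos d̄(X,Y) = max{⟨x,y⟩ : x ∈ X ∩ B, y ∈ Y ∩ B}`. -/
def cosAng {k : ℕ} (X Y : Set (Euc k)) : ℝ :=
  sSup (Set.image2 (fun x y => ⟪x, y⟫_ℝ) (X ∩ closedBall 0 1) (Y ∩ closedBall 0 1))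

/-- `sin d̄(X,Y) = √(1 - cos d̄(X,Y)²)`. -/
def sinAng {k : ℕ} (X Y : Set (Euc k)) : ℝ := Real.sqrt (1 - cosAng X Y ^ 2)

/-- The Kronecker (tensor) product `x ⊗ y ∈ ℝ^{mn}`. -/
def kron {m n : ℕ} (x : Euc m) (y : Euc n) : EuclideanSpace ℝ (Fin m × Fin n) :=
  (EuclideanSpace.equiv (Fin m × Fin n) ℝ).symm (fun p => x p.1 * y p.2)

/-- The primal feasible set `𝒫(C,D) = {A | ∃ x ∈ C \ {0}, Ax ∈ D°}`. -/
def primalSet {m n : ℕ} (C : Set (Euc m)) (D : Set (Euc n)) :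
    Set (Matrix (Fin n) (Fin m) ℝ) :=
  {A | ∃ x ∈ C, x ≠ 0 ∧ mulE A x ∈ polarCone D}

/-- The dual feasible set `𝒟(C,D) = {A | ∃ y ∈ D \ {0}, -Aᵀy ∈ C°}`. -/
def dualSet {m n : ℕ} (C : Set (Euc m)) (D : Set (Euc n)) :
    Set (Matrix (Fin n) (Fin m) ℝ) :=
  {A | ∃ y ∈ D, y ≠ 0 ∧ -(mulE A.transpose y) ∈ polarCone C}

/-- `K₂` is a `0`-contraction of `K₁`: there are generating sets `M₁` of `K₁`, `M₂` of `K₂`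
(i.e. `Kᵢ` is the closed convex hull of `Mᵢ`) and a surjection `φ : M₁ → M₂` that is
`1`-Lipschitz and norm-nonincreasing. -/
def IsZeroContractionOf {E₁ E₂ : Type*} [NormedAddCommGroup E₁] [NormedSpace ℝ E₁]
    [NormedAddCommGroup E₂] [NormedSpace ℝ E₂] (K₁ : Set E₁) (K₂ : Set E₂) : Prop :=
  ∃ (M₁ : Set E₁) (M₂ : Set E₂) (φ : E₁ → E₂),
    closure (convexHull ℝ M₁) = K₁ ∧ closure (convexHull ℝ M₂) = K₂ ∧
    φ '' M₁ = M₂ ∧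
    (∀ x ∈ M₁, ∀ x' ∈ M₁, ‖φ x - φ x'‖ ≤ ‖x - x'‖) ∧
    (∀ x ∈ M₁, ‖φ x‖ ≤ ‖x‖)

/-- The pair `(x, y)` regarded as an element of the Euclidean (ℓ²) product. -/
def pairL2 {m n : ℕ} (x : Euc m) (y : Euc n) : WithLp 2 (Euc m × Euc n) :=
  (WithLp.equiv 2 (Euc m × Euc n)).symm (x, y)

/-- The product `K × K'` as a subset of the Euclidean (ℓ²) product space. -/
def prodL2 {m n : ℕ} (K : Set (Euc m)) (K' : Set (Euc n)) : Set (WithLp 2 (Euc m × Euc n)) :=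
  {q | ((WithLp.equiv 2 (Euc m × Euc n)) q).1 ∈ K ∧ ((WithLp.equiv 2 (Euc m × Euc n)) q).2 ∈ K'}



lemma my_sum_extend_eq {ι κ : Type*} {α : Type*} [Fintype ι] [Fintype κ] [AddCommMonoid α]
    (g : ι ↪ κ) (F : κ → α) (hF : ∀ j, (¬ ∃ i, g i = j) → F j = 0) :
    ∑ j, F j = ∑ i, F (g i) := by
  rw [← Finset.sum_map Finset.univ g F]
  symm
  apply Finset.sum_subset (Finset.subset_univ _)
  intro j _ hj
  apply hF
  rintro ⟨i, rfl⟩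
  exact hj (Finset.mem_map.2 ⟨i, Finset.mem_univ _, rfl⟩)

theorem myIsCompact_convexHull {E : Type*} [NormedAddCommGroup E] [NormedSpace ℝ E]
    [FiniteDimensional ℝ E] {s : Set E} (hs : IsCompact s) : IsCompact (convexHull ℝ s) := by
  rcases s.eq_empty_or_nonempty with rfl | ⟨x₀, hx₀⟩
  · simp
  set N := Module.finrank ℝ E + 1 with hN
  set f : (Fin N → ℝ) × (Fin N → E) → E := fun p => ∑ i, p.1 i • p.2 i with hf
  have hfc : Continuous f := by
    apply continuous_finset_sum
    intro i _
    exact ((continuous_apply i).comp continuous_fst).smul ((continuous_apply i).comp continuous_snd)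
  have hS : IsCompact ((stdSimplex ℝ (Fin N)) ×ˢ (Set.univ.pi fun _ : Fin N => s)) :=
    (isCompact_stdSimplex ℝ _).prod (isCompact_univ_pi fun _ => hs)
  have heq : convexHull ℝ s = f '' ((stdSimplex ℝ (Fin N)) ×ˢ (Set.univ.pi fun _ : Fin N => s)) := by
    apply Subset.antisymm
    · intro x hx
      obtain ⟨ι, hfin, z, w, hzs, hai, hw0, hw1, hwz⟩ :=
        eq_pos_convex_span_of_mem_convexHull hx
      have hcard : Fintype.card ι ≤ N := by
        refine (hai.card_le_finrank_succ).trans ?_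
        exact Nat.add_le_add_right (Submodule.finrank_le _) 1
      obtain ⟨g⟩ : Nonempty (ι ↪ Fin N) :=
        Function.Embedding.nonempty_of_card_le (by simpa using hcard)
      classical
      set w' : Fin N → ℝ := fun j => if h : ∃ i, g i = j then w h.choose else 0 with hw'
      set z' : Fin N → E := fun j => if h : ∃ i, g i = j then z h.choose else x₀ with hz'
      have hchoose : ∀ i : ι, (⟨i, rfl⟩ : ∃ i', g i' = g i).choose = i := by
        intro i
        exact g.injective (⟨i, rfl⟩ : ∃ i', g i' = g i).choose_spec
      refine ⟨(w', z'), ⟨⟨fun j => ?_, ?_⟩, fun j _ => ?_⟩, ?_⟩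
      · rw [hw']
        dsimp only
        split
        · exact (hw0 _).le
        · rfl
      · rw [my_sum_extend_eq g w' (fun j hj => by simp [hw', dif_neg hj])]
        rw [← hw1]
        apply Finset.sum_congr rfl
        intro i _
        simp [hw', hchoose i]
      · rw [hz']
        dsimp only
        split
        case isTrue h => exact hzs ⟨_, rfl⟩
        case isFalse => exact hx₀
      · rw [hf]
        dsimp only
        rw [my_sum_extend_eq g (fun j => w' j • z' j) (fun j hj => by simp [hw', dif_neg hj])]
        rw [← hwz]
        apply Finset.sum_congr rfl
        intro i _
        simp [hw', hz', hchoose i]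
    · rintro _ ⟨⟨w, z⟩, ⟨⟨hw0, hw1⟩, hz⟩, rfl⟩
      exact (convex_convexHull ℝ s).sum_mem (fun i _ => hw0 i) hw1
        (fun i _ => subset_convexHull ℝ s (hz i (Set.mem_univ i)))
  rw [heq]
  exact hS.image hfc

lemma kron_apply {m n : ℕ} (x : Euc m) (y : Euc n) (p : Fin m × Fin n) :
    kron x y p = x p.1 * y p.2 := rfl

lemma opNorm_nonneg {m n : ℕ} (A : Matrix (Fin n) (Fin m) ℝ) : 0 ≤ opNorm A := norm_nonneg _

lemma mulE_norm_le {m n : ℕ} (A : Matrix (Fin n) (Fin m) ℝ) (x : Euc m) :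
    ‖mulE A x‖ ≤ opNorm A * ‖x‖ := by
  have := (LinearMap.toContinuousLinearMap (Matrix.toEuclideanLin A)).le_opNorm x
  simpa [mulE, opNorm] using this

lemma mulE_smul {m n : ℕ} (A : Matrix (Fin n) (Fin m) ℝ) (c : ℝ) (x : Euc m) :
    mulE A (c • x) = c • mulE A x := by simp [mulE]

lemma mulE_sub {m n : ℕ} (A : Matrix (Fin n) (Fin m) ℝ) (x y : Euc m) :
    mulE A (x - y) = mulE A x - mulE A y := by simp [mulE]

def PhiT {m n k : ℕ} (T : Matrix (Fin k) (Fin n) ℝ) (z : EuclideanSpace ℝ (Fin m × Fin n)) :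
    EuclideanSpace ℝ (Fin m × Fin k) :=
  (EuclideanSpace.equiv (Fin m × Fin k) ℝ).symm fun p =>
    mulE T ((EuclideanSpace.equiv (Fin n) ℝ).symm fun j => z (p.1, j)) p.2

lemma PhiT_apply {m n k : ℕ} (T : Matrix (Fin k) (Fin n) ℝ)
    (z : EuclideanSpace ℝ (Fin m × Fin n)) (p : Fin m × Fin k) :
    PhiT T z p = mulE T ((EuclideanSpace.equiv (Fin n) ℝ).symm fun j => z (p.1, j)) p.2 := rfl

lemma PhiT_kron {m n k : ℕ} (T : Matrix (Fin k) (Fin n) ℝ) (x : Euc m) (y : Euc n) :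
    PhiT T (kron x y) = kron x (mulE T y) := by
  ext p
  rw [PhiT_apply, kron_apply]
  have hrow : ((EuclideanSpace.equiv (Fin n) ℝ).symm fun j => kron x y (p.1, j)) = x p.1 • y := by
    ext j
    simp [kron_apply]
  rw [hrow, mulE_smul]
  simp

lemma PhiT_sub {m n k : ℕ} (T : Matrix (Fin k) (Fin n) ℝ)
    (z z' : EuclideanSpace ℝ (Fin m × Fin n)) :
    PhiT T (z - z') = PhiT T z - PhiT T z' := by
  ext p
  simp only [PiLp.sub_apply]
  rw [PhiT_apply, PhiT_apply, PhiT_apply]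
  have hrow : ((EuclideanSpace.equiv (Fin n) ℝ).symm fun j => (z - z') (p.1, j)) =
      ((EuclideanSpace.equiv (Fin n) ℝ).symm fun j => z (p.1, j)) -
      ((EuclideanSpace.equiv (Fin n) ℝ).symm fun j => z' (p.1, j)) := by
    ext j
    simp
  rw [hrow, mulE_sub]
  simp

lemma euc_norm_sq {d : ℕ} (w : Euc d) : ‖w‖ ^ 2 = ∑ j, (w j) ^ 2 := by
  rw [EuclideanSpace.norm_eq, Real.sq_sqrt (by positivity)]
  simp [sq_abs]

lemma euc_norm_sq' {m n : ℕ} (w : EuclideanSpace ℝ (Fin m × Fin n)) :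
    ‖w‖ ^ 2 = ∑ p : Fin m × Fin n, (w p) ^ 2 := by
  rw [EuclideanSpace.norm_eq, Real.sq_sqrt (by positivity)]
  simp [sq_abs]

lemma PhiT_norm_le {m n k : ℕ} (T : Matrix (Fin k) (Fin n) ℝ)
    (z : EuclideanSpace ℝ (Fin m × Fin n)) :
    ‖PhiT T z‖ ≤ opNorm T * ‖z‖ := by
  set row : Fin m → Euc n := fun i => (EuclideanSpace.equiv (Fin n) ℝ).symm fun j => z (i, j)
    with hrow
  have h1 : ‖PhiT T z‖ ^ 2 = ∑ i, ‖mulE T (row i)‖ ^ 2 := by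
    rw [euc_norm_sq']
    rw [Fintype.sum_prod_type]
    apply Finset.sum_congr rfl
    intro i _
    rw [euc_norm_sq]
    rfl
  have h2 : ‖z‖ ^ 2 = ∑ i, ‖row i‖ ^ 2 := by
    rw [euc_norm_sq']
    rw [Fintype.sum_prod_type]
    apply Finset.sum_congr rfl
    intro i _
    rw [euc_norm_sq]
    rfl
  have h3 : ‖PhiT T z‖ ^ 2 ≤ (opNorm T * ‖z‖) ^ 2 := by
    rw [h1, mul_pow, h2, Finset.mul_sum]
    apply Finset.sum_le_sum
    intro i _
    rw [← mul_pow]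
    exact pow_le_pow_left₀ (norm_nonneg _) (mulE_norm_le T (row i)) 2
  calc ‖PhiT T z‖ = Real.sqrt (‖PhiT T z‖ ^ 2) := (Real.sqrt_sq (norm_nonneg _)).symm
    _ ≤ Real.sqrt ((opNorm T * ‖z‖) ^ 2) := Real.sqrt_le_sqrt h3
    _ = opNorm T * ‖z‖ := Real.sqrt_sq (mul_nonneg (opNorm_nonneg T) (norm_nonneg _))

lemma kron_smul_right {m n : ℕ} (x : Euc m) (c : ℝ) (y : Euc n) :
    kron x (c • y) = c • kron x y := by
  ext p
  simp [kron_apply]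
  ring

lemma kron_zero_right {m n : ℕ} (x : Euc m) : kron x (0 : Euc n) = 0 := by
  ext p
  simp [kron_apply]

lemma mulE_eq_zero_of_opNorm {n k : ℕ} {T : Matrix (Fin k) (Fin n) ℝ} (h : opNorm T = 0)
    (y : Euc n) : mulE T y = 0 := by
  have := mulE_norm_le T y
  rw [h, zero_mul] at this
  exact norm_le_zero_iff.mp this

/-- For `T ∈ ℝ^{k×n}` and unit `x₁, x₂ ∈ ℝ^m`, `y₁, y₂ ∈ ℝ^n`:
`‖x₁ ⊗ (Ty₁) − x₂ ⊗ (Ty₂)‖ ≤ ‖T‖ ‖x₁ ⊗ y₁ − x₂ ⊗ y₂‖` and `‖x₁ ⊗ (Ty₁)‖ ≤ ‖T‖ ‖x₁ ⊗ y₁‖`;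
consequently, for closed `M ⊆ S^{m−1}`, `K = conv(M)`, and a convex body `K'` with `0 ∈ K'`,
`K ⊗̂ (TK')` is a `0`-contraction of `K ⊗̂ (‖T‖ K')`. -/
theorem statement16 {m n k : ℕ} (T : Matrix (Fin k) (Fin n) ℝ) :
    (∀ x₁ x₂ : Euc m, ‖x₁‖ = 1 → ‖x₂‖ = 1 → ∀ y₁ y₂ : Euc n,
      ‖kron x₁ (mulE T y₁) - kron x₂ (mulE T y₂)‖ ≤ opNorm T * ‖kron x₁ y₁ - kron x₂ y₂‖ ∧
      ‖kron x₁ (mulE T y₁)‖ ≤ opNorm T * ‖kron x₁ y₁‖) ∧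
    (∀ M : Set (Euc m), IsClosed M → M ⊆ sphere (0 : Euc m) 1 →
      ∀ K' : Set (Euc n), Convex ℝ K' → IsCompact K' → K'.Nonempty → (0 : Euc n) ∈ K' →
      IsZeroContractionOf
        (convexHull ℝ (Set.image2 kron (convexHull ℝ M) (opNorm T • K')))
        (convexHull ℝ (Set.image2 kron (convexHull ℝ M) (mulE T '' K')))) := by
  constructor
  · intro x₁ x₂ _ _ y₁ y₂
    refine ⟨?_, ?_⟩
    · calc ‖kron x₁ (mulE T y₁) - kron x₂ (mulE T y₂)‖
          = ‖PhiT T (kron x₁ y₁ - kron x₂ y₂)‖ := by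
            rw [PhiT_sub, PhiT_kron, PhiT_kron]
        _ ≤ opNorm T * ‖kron x₁ y₁ - kron x₂ y₂‖ := PhiT_norm_le T _
    · rw [← PhiT_kron]
      exact PhiT_norm_le T _
  · intro M hMcl hMs K' hK'conv hK'cp hK'ne hK'0
    have hc0 : 0 ≤ opNorm T := opNorm_nonneg T
    have hφ : ∀ (a : Euc m) (y : Euc n),
        (opNorm T)⁻¹ • PhiT T (kron a (opNorm T • y)) = kron a (mulE T y) := by
      intro a y
      rw [PhiT_kron, mulE_smul, kron_smul_right, smul_smul]
      rcases eq_or_ne (opNorm T) 0 with h0 | h0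
      · have hT0 : mulE T y = 0 := mulE_eq_zero_of_opNorm h0 y
        rw [hT0, kron_zero_right, h0]
        simp
      · rw [inv_mul_cancel₀ h0, one_smul]
    have hM : IsCompact M := IsCompact.of_isClosed_subset (isCompact_sphere 0 1) hMcl hMs
    have hhullM : IsCompact (convexHull ℝ M) := myIsCompact_convexHull hM
    have hev : ∀ {d : ℕ} (i : Fin d), Continuous fun x : Euc d => x i := by
      intro d i
      exact (continuous_apply i).comp (EuclideanSpace.equiv (Fin d) ℝ).continuous
    have hcK' : IsCompact (opNorm T • K') := by
      rw [← Set.image_smul]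
      exact hK'cp.image (continuous_const_smul _)
    have hTK' : IsCompact (mulE T '' K') := by
      apply hK'cp.image
      exact LinearMap.continuous_of_finiteDimensional (Matrix.toEuclideanLin T)
    have him : ∀ {d : ℕ} (S : Set (Euc d)), IsCompact S →
        closure (convexHull ℝ (Set.image2 kron (convexHull ℝ M) S)) =
          convexHull ℝ (Set.image2 kron (convexHull ℝ M) S) := by
      intro d S hS
      have hkc : Continuous (Function.uncurry (kron (m := m) (n := d))) := by
        apply Continuous.comp (EuclideanSpace.equiv (Fin m × Fin d) ℝ).symm.continuous
        apply continuous_pi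
        intro p
        exact ((hev p.1).comp continuous_fst).mul ((hev p.2).comp continuous_snd)
      apply IsClosed.closure_eq
      apply IsCompact.isClosed
      apply myIsCompact_convexHull
      rw [← Set.image_uncurry_prod]
      exact (hhullM.prod hS).image hkc
    refine ⟨Set.image2 kron (convexHull ℝ M) (opNorm T • K'),
            Set.image2 kron (convexHull ℝ M) (mulE T '' K'),
            fun z => (opNorm T)⁻¹ • PhiT T z, him _ hcK', him _ hTK', ?_, ?_, ?_⟩
    · ext v
      simp only [Set.mem_image, Set.mem_image2]
      constructor
      · rintro ⟨z, ⟨a, ha, u, hu, rfl⟩, rfl⟩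
        obtain ⟨y, hy, rfl⟩ := hu
        exact ⟨a, ha, mulE T y, ⟨y, hy, rfl⟩, (hφ a y).symm⟩
      · rintro ⟨a, ha, u, ⟨y, hy, rfl⟩, rfl⟩
        exact ⟨kron a (opNorm T • y), ⟨a, ha, opNorm T • y, Set.smul_mem_smul_set hy, rfl⟩,
          hφ a y⟩
    · intro z _ z' _
      have he : (opNorm T)⁻¹ • PhiT T z - (opNorm T)⁻¹ • PhiT T z' =
          (opNorm T)⁻¹ • PhiT T (z - z') := by
        rw [PhiT_sub, smul_sub]
      rw [he, norm_smul, Real.norm_eq_abs, abs_of_nonneg (inv_nonneg.mpr hc0)]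
      calc (opNorm T)⁻¹ * ‖PhiT T (z - z')‖ ≤ (opNorm T)⁻¹ * (opNorm T * ‖z - z'‖) :=
          mul_le_mul_of_nonneg_left (PhiT_norm_le T _) (inv_nonneg.mpr hc0)
        _ = ((opNorm T)⁻¹ * opNorm T) * ‖z - z'‖ := by ring
        _ ≤ 1 * ‖z - z'‖ := by
            apply mul_le_mul_of_nonneg_right _ (norm_nonneg _)
            rcases eq_or_ne (opNorm T) 0 with h | h
            · simp [h]
            · simp [inv_mul_cancel₀ h]
        _ = ‖z - z'‖ := one_mul _
    · intro z _
      rw [norm_smul, Real.norm_eq_abs, abs_of_nonneg (inv_nonneg.mpr hc0)]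
      calc (opNorm T)⁻¹ * ‖PhiT T z‖ ≤ (opNorm T)⁻¹ * (opNorm T * ‖z‖) :=
          mul_le_mul_of_nonneg_left (PhiT_norm_le T _) (inv_nonneg.mpr hc0)
        _ = ((opNorm T)⁻¹ * opNorm T) * ‖z‖ := by ring
        _ ≤ 1 * ‖z‖ := by
            apply mul_le_mul_of_nonneg_right _ (norm_nonneg _)
            rcases eq_or_ne (opNorm T) 0 with h | h
            · simp [h]
            · simp [inv_mul_cancel₀ h]
        _ = ‖z‖ := one_mul _


end
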